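/- Under the true-proportional-navigation engagement kinematics (r' = V_T cos(γ_T − θ) − V_P cos δ, r·θ' = V_T sin(γ_T − θ) − V_P sin δ, γ_P' = a cos δ / V_P, V_P' = a sin δ, δ = γ_P − θ, constants V_T, γ_T, c), let s : ℝ → ℝ be any function, let α, β ∈ ℝ, let t_e > 0 and let h be the scaling function associated with t_e. If on an interval I ⊆ (0, t_e) one has r > 0, V_P ≠ 0, V_θ ≠ 0, V_r + 2c ≠ 0, Q = V_θ² + V_r² + 2c·V_r ≠ 0, and the command a(t) = c·θ'(t) + [Q(t)²/(2·(V_r(t) + 2c)·V_θ(t)·r(t))]·(α − β·h'(t)/h(t))·s(t) is applied, then t_go = −r·(V_r + 2c)/Q satisfies t_go'(t) = −1 + (−α + β·h'(t)/h(t))·s(t) for all t ∈ I. -/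

import Mathlib

/-- The prescribed-time scaling function associated with `te`:
`h(t) = (te/π)·sin(πt/te) + t − te` for `t < te` and `h(t) = 1` for `t ≥ te`. -/
noncomputable def scalingFn (te t : ℝ) : ℝ :=
  if t < te then (te / Real.pi) * Real.sin (Real.pi * t / te) + t - te else 1

/-- Deviation angle `δ = γ_P − θ`. -/
noncomputable def devAngle (θ γP : ℝ → ℝ) (t : ℝ) : ℝ := γP t - θ t

/-- Relative velocity component along the line of sight (time-varying pursuer speed). -/
noncomputable def VradT (VT γT : ℝ) (θ γP VP : ℝ → ℝ) (t : ℝ) : ℝ :=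
  VT * Real.cos (γT - θ t) - VP t * Real.cos (devAngle θ γP t)

/-- Relative velocity component across the line of sight (time-varying pursuer speed). -/
noncomputable def VlosT (VT γT : ℝ) (θ γP VP : ℝ → ℝ) (t : ℝ) : ℝ :=
  VT * Real.sin (γT - θ t) - VP t * Real.sin (devAngle θ γP t)

/-- `Q = V_θ² + V_r² + 2c·V_r`. -/
noncomputable def Qtpn (VT γT c : ℝ) (θ γP VP : ℝ → ℝ) (t : ℝ) : ℝ :=
  VlosT VT γT θ γP VP t ^ 2 + VradT VT γT θ γP VP t ^ 2 + 2 * c * VradT VT γT θ γP VP t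

/-- True-proportional-navigation time-to-go `t_go = −r (V_r + 2c)/Q`. -/
noncomputable def tgoTPN (VT γT c : ℝ) (r θ γP VP : ℝ → ℝ) (t : ℝ) : ℝ :=
  -(r t * (VradT VT γT θ γP VP t + 2 * c)) / Qtpn VT γT c θ γP VP t

/-! With `r' = V_r`, `V_r' = θ' V_θ`, `V_θ' = -θ' V_r - a` and `r θ' = V_θ`, the numerator
`N = -r (V_r + 2c)` of `t_go` satisfies `N' = -Q`, while `Q' = -2 V_θ (a - c θ')`.
Hence `t_go' = -1 - 2 r (V_r + 2c) V_θ (a - c θ') / Q²`, and the command is exactly the choice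
of `a - c θ'` that turns the last term into `(-α + β h'/h) s`. -/

theorem hasDerivAt_div_of_hasDerivAt_num_eq_neg {N D : ℝ → ℝ} {D' t : ℝ}
    (hN : HasDerivAt N (-D t) t) (hD : HasDerivAt D D' t) (hDt : D t ≠ 0) :
    HasDerivAt (fun τ => N τ / D τ) (-1 - N t * D' / D t ^ 2) t :=
  (hN.div hD hDt).congr_deriv (by field_simp)

section RelativeMotion

/- Polar relative motion: `V`, `W` are the radial and transverse relative velocities,
`ω` the line-of-sight rate and `u` the pursuer acceleration normal to the line of sight. -/
variable {r V W : ℝ → ℝ} {t ω u c : ℝ}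

theorem hasDerivAt_neg_mul_add_const (hr : HasDerivAt r (V t) t)
    (hV : HasDerivAt V (ω * W t) t) (hrω : r t * ω = W t) :
    HasDerivAt (fun τ => -(r τ * (V τ + 2 * c))) (-(W t ^ 2 + V t ^ 2 + 2 * c * V t)) t := by
  refine (hr.mul (hV.add_const (2 * c))).neg.congr_deriv ?_
  rw [← hrω]
  ring

theorem hasDerivAt_sq_add_sq_add_mul (hV : HasDerivAt V (ω * W t) t)
    (hW : HasDerivAt W (-(ω * V t) - u) t) :
    HasDerivAt (fun τ => W τ ^ 2 + V τ ^ 2 + 2 * c * V τ) (-(2 * W t * (u - c * ω))) t := by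
  refine (((hW.pow 2).add (hV.pow 2)).add (hV.const_mul (2 * c))).congr_deriv ?_
  simp only [Nat.cast_ofNat]
  ring

theorem hasDerivAt_neg_mul_add_const_div (hr : HasDerivAt r (V t) t)
    (hV : HasDerivAt V (ω * W t) t) (hW : HasDerivAt W (-(ω * V t) - u) t)
    (hrω : r t * ω = W t) (hQ : W t ^ 2 + V t ^ 2 + 2 * c * V t ≠ 0) :
    HasDerivAt (fun τ => -(r τ * (V τ + 2 * c)) / (W τ ^ 2 + V τ ^ 2 + 2 * c * V τ))
      (-1 - 2 * r t * (V t + 2 * c) * W t * (u - c * ω)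
        / (W t ^ 2 + V t ^ 2 + 2 * c * V t) ^ 2) t := by
  refine (hasDerivAt_div_of_hasDerivAt_num_eq_neg (hasDerivAt_neg_mul_add_const hr hV hrω)
    (hasDerivAt_sq_add_sq_add_mul hV hW) hQ).congr_deriv ?_
  ring

end RelativeMotion

section Kinematics

variable {VT γT : ℝ} {θ γP VP : ℝ → ℝ} {t θd a : ℝ}

theorem hasDerivAt_devAngle {γd : ℝ} (hθ : HasDerivAt θ θd t) (hγ : HasDerivAt γP γd t) :
    HasDerivAt (devAngle θ γP) (γd - θd) t :=
  hγ.sub hθ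

theorem hasDerivAt_VradT (hθ : HasDerivAt θ θd t)
    (hγ : HasDerivAt γP (a * Real.cos (devAngle θ γP t) / VP t) t)
    (hVP : HasDerivAt VP (a * Real.sin (devAngle θ γP t)) t) (hVPt : VP t ≠ 0) :
    HasDerivAt (VradT VT γT θ γP VP) (θd * VlosT VT γT θ γP VP t) t := by
  have hδ := hasDerivAt_devAngle hθ hγ
  refine ((((hθ.const_sub γT).cos).const_mul VT).sub (hVP.mul hδ.cos)).congr_deriv ?_
  simp only [VlosT]
  field_simp
  ring

theorem hasDerivAt_VlosT (hθ : HasDerivAt θ θd t)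
    (hγ : HasDerivAt γP (a * Real.cos (devAngle θ γP t) / VP t) t)
    (hVP : HasDerivAt VP (a * Real.sin (devAngle θ γP t)) t) (hVPt : VP t ≠ 0) :
    HasDerivAt (VlosT VT γT θ γP VP) (-(θd * VradT VT γT θ γP VP t) - a) t := by
  have hδ := hasDerivAt_devAngle hθ hγ
  refine ((((hθ.const_sub γT).sin).const_mul VT).sub (hVP.mul hδ.sin)).congr_deriv ?_
  simp only [VradT]
  field_simp
  linear_combination (-a) * Real.sin_sq_add_cos_sq (devAngle θ γP t)

end Kinematics

theorem neg_one_sub_mul_div_sq_eq {r V W Q e s : ℝ} (hr : r ≠ 0) (hV : V ≠ 0) (hW : W ≠ 0)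
    (hQ : Q ≠ 0) : -1 - 2 * r * V * W * (Q ^ 2 / (2 * V * W * r) * e * s) / Q ^ 2 = -1 + -e * s := by
  field_simp
  ring

theorem tgoTPN_closed_loop_general
    (VT γT c : ℝ) (α β te : ℝ)
    (s : ℝ → ℝ) (I : Set ℝ)
    (r θ γP VP a θd : ℝ → ℝ)
    (hr : ∀ t ∈ I, HasDerivAt r (VradT VT γT θ γP VP t) t)
    (hθ : ∀ t ∈ I, HasDerivAt θ (θd t) t)
    (hθd : ∀ t ∈ I, r t * θd t = VlosT VT γT θ γP VP t)
    (hγ : ∀ t ∈ I, HasDerivAt γP (a t * Real.cos (devAngle θ γP t) / VP t) t)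
    (hVPd : ∀ t ∈ I, HasDerivAt VP (a t * Real.sin (devAngle θ γP t)) t)
    (hrpos : ∀ t ∈ I, 0 < r t)
    (hVPne : ∀ t ∈ I, VP t ≠ 0)
    (hVθ : ∀ t ∈ I, VlosT VT γT θ γP VP t ≠ 0)
    (hVr2c : ∀ t ∈ I, VradT VT γT θ γP VP t + 2 * c ≠ 0)
    (hQ : ∀ t ∈ I, Qtpn VT γT c θ γP VP t ≠ 0)
    (hcmd : ∀ t ∈ I,
      a t = c * θd t
        + (Qtpn VT γT c θ γP VP t ^ 2
            / (2 * (VradT VT γT θ γP VP t + 2 * c) * VlosT VT γT θ γP VP t * r t))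
          * (α - β * ((Real.cos (Real.pi * t / te) + 1) / scalingFn te t)) * s t) :
    ∀ t ∈ I, HasDerivAt (tgoTPN VT γT c r θ γP VP)
      (-1 + (-α + β * ((Real.cos (Real.pi * t / te) + 1) / scalingFn te t)) * s t) t := by
  intro t ht
  have htgo := hasDerivAt_neg_mul_add_const_div (hr t ht)
    (hasDerivAt_VradT (hθ t ht) (hγ t ht) (hVPd t ht) (hVPne t ht))
    (hasDerivAt_VlosT (hθ t ht) (hγ t ht) (hVPd t ht) (hVPne t ht)) (hθd t ht) (hQ t ht)
  refine htgo.congr_deriv ?_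
  rw [hcmd t ht, add_sub_cancel_left]
  refine (neg_one_sub_mul_div_sq_eq (hrpos t ht).ne' (hVr2c t ht) (hVθ t ht) (hQ t ht)).trans ?_
  ring

/-- Corollary 2 of the paper: under the proposed
true-proportional-navigation cooperative command, the time-to-go dynamics reduce
to `t_go' = −1 + (−α + β h'/h) s`. -/
theorem tgoTPN_closed_loop
    (VT γT c : ℝ) (α β te : ℝ) (hte : 0 < te)
    (s : ℝ → ℝ) (I : Set ℝ) (hI : I ⊆ Set.Ioo 0 te)
    (r θ γP VP a θd : ℝ → ℝ)
    (hr : ∀ t ∈ I, HasDerivAt r (VradT VT γT θ γP VP t) t)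
    (hθ : ∀ t ∈ I, HasDerivAt θ (θd t) t)
    (hθd : ∀ t ∈ I, r t * θd t = VlosT VT γT θ γP VP t)
    (hγ : ∀ t ∈ I, HasDerivAt γP (a t * Real.cos (devAngle θ γP t) / VP t) t)
    (hVPd : ∀ t ∈ I, HasDerivAt VP (a t * Real.sin (devAngle θ γP t)) t)
    (hrpos : ∀ t ∈ I, 0 < r t)
    (hVPne : ∀ t ∈ I, VP t ≠ 0)
    (hVθ : ∀ t ∈ I, VlosT VT γT θ γP VP t ≠ 0)
    (hVr2c : ∀ t ∈ I, VradT VT γT θ γP VP t + 2 * c ≠ 0)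
    (hQ : ∀ t ∈ I, Qtpn VT γT c θ γP VP t ≠ 0)
    (hcmd : ∀ t ∈ I,
      a t = c * θd t
        + (Qtpn VT γT c θ γP VP t ^ 2
            / (2 * (VradT VT γT θ γP VP t + 2 * c) * VlosT VT γT θ γP VP t * r t))
          * (α - β * ((Real.cos (Real.pi * t / te) + 1) / scalingFn te t)) * s t) :
    ∀ t ∈ I, HasDerivAt (tgoTPN VT γT c r θ γP VP)
      (-1 + (-α + β * ((Real.cos (Real.pi * t / te) + 1) / scalingFn te t)) * s t) t :=
  tgoTPN_closed_loop_general VT γT c α β te s I r θ γP VP a θd hr hθ hθd hγ hVPd hrpos hVPne hVθ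
    hVr2c hQ hcmd
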